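/- Let E be a real inner product space, let μ₀, μ₁ ∈ E be unit vectors with α = arccos⟨μ₀,μ₁⟩ ∈ (0,π), and let μ = Slerp(μ₀,μ₁,t₀) for some t₀ ∈ (0,1). Then the spherical logarithmic maps of the two endpoints at μ are anti-parallel: ‖Log_μ(μ₀)‖ = t₀α, ‖Log_μ(μ₁)‖ = (1−t₀)α, and Log_μ(μ₀)/‖Log_μ(μ₀)‖ = − Log_μ(μ₁)/‖Log_μ(μ₁)‖. -/

import Mathlib

open Real

open scoped RealInnerProductSpace

/-- Spherical linear interpolation between `p` and `q` at parameter `t`. -/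
noncomputable def slerp {E : Type*} [NormedAddCommGroup E] [InnerProductSpace ℝ E]
    (p q : E) (t : ℝ) : E :=
  (Real.sin ((1 - t) * Real.arccos ⟪p, q⟫) / Real.sin (Real.arccos ⟪p, q⟫)) • p +
    (Real.sin (t * Real.arccos ⟪p, q⟫) / Real.sin (Real.arccos ⟪p, q⟫)) • q

/-- The spherical logarithmic map at base point `μ`. -/
noncomputable def sphLog {E : Type*} [NormedAddCommGroup E] [InnerProductSpace ℝ E]
    (μ x : E) : E :=
  (Real.arccos ⟪μ, x⟫ / Real.sin (Real.arccos ⟪μ, x⟫)) •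
    (x - Real.cos (Real.arccos ⟪μ, x⟫) • μ)

/-! With `α = arccos ⟪p, q⟫`, `a = tα` and `b = (1 - t)α`, so that `α = a + b`, the point
`μ = Slerp(p, q, t)` satisfies `⟪μ, p⟫ = cos a` and `⟪μ, q⟫ = cos b`, and the components of `p`
and `q` orthogonal to `μ` are `-sin a • u` and `sin b • u` for one and the same unit vector `u`,
the direction of the geodesic at `μ`. Hence `Log_μ p = -a • u` and `Log_μ q = b • u`. -/

section

variable {E : Type*} [NormedAddCommGroup E] [InnerProductSpace ℝ E]

lemma cos_arccos_of_mem_Ioo {x : ℝ} (h : arccos x ∈ Set.Ioo 0 π) : cos (arccos x) = x :=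
  cos_arccos (arccos_lt_pi.mp h.2).le (arccos_pos.mp h.1).le

lemma slerp_comm (p q : E) (t : ℝ) : slerp q p (1 - t) = slerp p q t := by
  rw [slerp, slerp, real_inner_comm, sub_sub_cancel, add_comm]

/-- The velocity of `t ↦ slerp p q t`, divided by the constant speed `arccos ⟪p, q⟫`. -/
noncomputable def slerpUnitTangent (p q : E) (t : ℝ) : E :=
  (sin (arccos ⟪p, q⟫))⁻¹ •
    (cos (t * arccos ⟪p, q⟫) • q - cos ((1 - t) * arccos ⟪p, q⟫) • p)

lemma slerpUnitTangent_comm (p q : E) (t : ℝ) :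
    slerpUnitTangent q p (1 - t) = -slerpUnitTangent p q t := by
  rw [slerpUnitTangent, slerpUnitTangent, real_inner_comm, sub_sub_cancel, ← smul_neg, neg_sub]

lemma inner_slerp_left {p q : E} (hp : ‖p‖ = 1) (hα : arccos ⟪p, q⟫ ∈ Set.Ioo 0 π) (t : ℝ) :
    ⟪slerp p q t, p⟫ = cos (t * arccos ⟪p, q⟫) := by
  have hs : sin (arccos ⟪p, q⟫) ≠ 0 := (sin_pos_of_pos_of_lt_pi hα.1 hα.2).ne'
  have hc := cos_arccos_of_mem_Ioo hα
  rw [slerp, inner_add_left, real_inner_smul_left, real_inner_smul_left,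
    inner_self_eq_one_of_norm_eq_one hp, real_inner_comm p q]
  generalize arccos ⟪p, q⟫ = α at hs hc ⊢
  rw [← hc]
  have hsplit : α = t * α + (1 - t) * α := by ring
  generalize t * α = a at hsplit ⊢
  generalize (1 - t) * α = b at hsplit ⊢
  subst hsplit
  field_simp
  rw [sin_add, cos_add]
  linear_combination -sin b * sin_sq_add_cos_sq a

lemma norm_slerpUnitTangent {p q : E} (hp : ‖p‖ = 1) (hq : ‖q‖ = 1)
    (hα : arccos ⟪p, q⟫ ∈ Set.Ioo 0 π) (t : ℝ) : ‖slerpUnitTangent p q t‖ = 1 := by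
  have hs : 0 < sin (arccos ⟪p, q⟫) := sin_pos_of_pos_of_lt_pi hα.1 hα.2
  have hc := cos_arccos_of_mem_Ioo hα
  have hw : ‖cos (t * arccos ⟪p, q⟫) • q - cos ((1 - t) * arccos ⟪p, q⟫) • p‖ ^ 2 =
      sin (arccos ⟪p, q⟫) ^ 2 := by
    rw [← real_inner_self_eq_norm_sq]
    simp only [inner_sub_left, inner_sub_right, real_inner_smul_left, real_inner_smul_right,
      inner_self_eq_one_of_norm_eq_one hp, inner_self_eq_one_of_norm_eq_one hq,
      real_inner_comm p q]
    generalize arccos ⟪p, q⟫ = α at hc ⊢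
    rw [← hc]
    have hsplit : α = t * α + (1 - t) * α := by ring
    generalize t * α = a at hsplit ⊢
    generalize (1 - t) * α = b at hsplit ⊢
    subst hsplit
    rw [sin_add, cos_add]
    linear_combination -cos b ^ 2 * sin_sq_add_cos_sq a - cos a ^ 2 * sin_sq_add_cos_sq b
  rw [slerpUnitTangent, norm_smul, (sq_eq_sq₀ (norm_nonneg _) hs.le).mp hw, norm_inv,
    Real.norm_of_nonneg hs.le, inv_mul_cancel₀ hs.ne']

lemma sub_cos_smul_slerp {p q : E} (hα : arccos ⟪p, q⟫ ∈ Set.Ioo 0 π) (t : ℝ) :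
    p - cos (t * arccos ⟪p, q⟫) • slerp p q t =
      -(sin (t * arccos ⟪p, q⟫) • slerpUnitTangent p q t) := by
  have hs : sin (arccos ⟪p, q⟫) ≠ 0 := (sin_pos_of_pos_of_lt_pi hα.1 hα.2).ne'
  rw [slerp, slerpUnitTangent]
  generalize arccos ⟪p, q⟫ = α at hs ⊢
  have hsplit : α = t * α + (1 - t) * α := by ring
  generalize t * α = a at hsplit ⊢
  generalize (1 - t) * α = b at hsplit ⊢
  subst hsplit
  match_scalars
  · field_simp
    rw [sin_add]
    ring
  · field_simp

lemma sphLog_slerp_left {p q : E} (hp : ‖p‖ = 1) (hα : arccos ⟪p, q⟫ ∈ Set.Ioo 0 π) {t : ℝ}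
    (ht : t ∈ Set.Icc 0 1) :
    sphLog (slerp p q t) p = -(t * arccos ⟪p, q⟫) • slerpUnitTangent p q t := by
  have ha₀ : 0 ≤ t * arccos ⟪p, q⟫ := mul_nonneg ht.1 hα.1.le
  have haπ : t * arccos ⟪p, q⟫ < π := by nlinarith [hα.1, hα.2, ht.2]
  -- makes `tα / sin (tα) * sin (tα) = tα` hold also at `t = 0`, where `x / 0 = 0`
  have hsin : sin (t * arccos ⟪p, q⟫) = 0 → t * arccos ⟪p, q⟫ = 0 :=
    (sin_eq_zero_iff_of_lt_of_lt (by linarith) haπ).mp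
  rw [sphLog, inner_slerp_left hp hα, arccos_cos ha₀ haπ.le, sub_cos_smul_slerp hα, smul_neg,
    smul_smul, div_mul_cancel_of_imp hsin, neg_smul]

lemma sphLog_slerp_right {p q : E} (hq : ‖q‖ = 1) (hα : arccos ⟪p, q⟫ ∈ Set.Ioo 0 π) {t : ℝ}
    (ht : t ∈ Set.Icc 0 1) :
    sphLog (slerp p q t) q = ((1 - t) * arccos ⟪p, q⟫) • slerpUnitTangent p q t := by
  rw [real_inner_comm] at hα
  have ht' : 1 - t ∈ Set.Icc 0 1 := ⟨by linarith [ht.2], by linarith [ht.1]⟩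
  rw [← slerp_comm, sphLog_slerp_left hq hα ht', slerpUnitTangent_comm, neg_smul_neg,
    real_inner_comm]

end

/-- At an interior point `μ = Slerp(μ₀,μ₁,t₀)` of the minimal geodesic, the
logarithmic maps of the two endpoints are anti-parallel, with norms `t₀ α`
and `(1 − t₀) α` respectively. -/
theorem sphLog_antiparallel_at_slerp
    {E : Type*} [NormedAddCommGroup E] [InnerProductSpace ℝ E]
    (μ₀ μ₁ : E) (h₀ : ‖μ₀‖ = 1) (h₁ : ‖μ₁‖ = 1)
    (hα : Real.arccos ⟪μ₀, μ₁⟫ ∈ Set.Ioo 0 Real.pi)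
    (t₀ : ℝ) (ht₀ : t₀ ∈ Set.Ioo (0 : ℝ) 1) :
    ‖sphLog (slerp μ₀ μ₁ t₀) μ₀‖ = t₀ * Real.arccos ⟪μ₀, μ₁⟫ ∧
      ‖sphLog (slerp μ₀ μ₁ t₀) μ₁‖ = (1 - t₀) * Real.arccos ⟪μ₀, μ₁⟫ ∧
      ‖sphLog (slerp μ₀ μ₁ t₀) μ₀‖⁻¹ • sphLog (slerp μ₀ μ₁ t₀) μ₀ =
        -(‖sphLog (slerp μ₀ μ₁ t₀) μ₁‖⁻¹ • sphLog (slerp μ₀ μ₁ t₀) μ₁) := by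
  have ha : 0 < t₀ * arccos ⟪μ₀, μ₁⟫ := mul_pos ht₀.1 hα.1
  have hb : 0 < (1 - t₀) * arccos ⟪μ₀, μ₁⟫ := mul_pos (sub_pos.mpr ht₀.2) hα.1
  have hu := norm_slerpUnitTangent h₀ h₁ hα t₀
  have hn₀ : ‖-(t₀ * arccos ⟪μ₀, μ₁⟫) • slerpUnitTangent μ₀ μ₁ t₀‖ = t₀ * arccos ⟪μ₀, μ₁⟫ := by
    rw [norm_smul, hu, mul_one, norm_neg, Real.norm_of_nonneg ha.le]
  have hn₁ : ‖((1 - t₀) * arccos ⟪μ₀, μ₁⟫) • slerpUnitTangent μ₀ μ₁ t₀‖ =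
      (1 - t₀) * arccos ⟪μ₀, μ₁⟫ := by
    rw [norm_smul, hu, mul_one, Real.norm_of_nonneg hb.le]
  rw [sphLog_slerp_left h₀ hα (Set.Ioo_subset_Icc_self ht₀),
    sphLog_slerp_right h₁ hα (Set.Ioo_subset_Icc_self ht₀), hn₀, hn₁]
  refine ⟨rfl, rfl, ?_⟩
  rw [neg_smul, smul_neg, inv_smul_smul₀ ha.ne', inv_smul_smul₀ hb.ne']
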